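/- (Strong completeness) The system LFD is strongly complete: for every set Ψ of LFD formulas and every LFD formula φ, if every admissible assignment of every dependence model that satisfies all formulas of Ψ also satisfies φ, then φ is provable from Ψ, i.e., there is a finite subset Ψ₀ ⊆ Ψ such that the implication ⋀Ψ₀ → φ is provable in the Hilbert system LFD. -/

import Mathlib

namespace LFD

/-- LFD formulas over variables `V` and a relational vocabulary `Pred` with arity map `ar`:
atoms `P x₁…x_n`, negation, conjunction, dependence modalities `𝔻_X φ`,
and dependence atoms `D_X y` (with `X ⊆ V` finite). -/
inductive Formula (V Pred : Type) (ar : Pred → ℕ) : Type where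
  | atom (P : Pred) (x : Fin (ar P) → V)
  | neg (φ : Formula V Pred ar)
  | conj (φ ψ : Formula V Pred ar)
  | dd (X : Finset V) (φ : Formula V Pred ar)
  | dep (X : Finset V) (y : V)

variable {V Pred O : Type} {ar : Pred → ℕ}

/-- The free variables of an LFD formula. -/
def Free [DecidableEq V] : Formula V Pred ar → Finset V
  | .atom _ x => Finset.univ.image x
  | .neg φ => Free φ
  | .conj φ ψ => Free φ ∪ Free ψ
  | .dd X _ => X
  | .dep X _ => X

/-- A dependence model: an interpretation `I` of each predicate symbol as a set of
tuples of objects, together with a set `A` of admissible assignments. -/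
structure DepModel (V Pred : Type) (ar : Pred → ℕ) (O : Type) where
  I : (P : Pred) → Set (Fin (ar P) → O)
  A : Set (V → O)

/-- `s =_X t` : the assignments `s` and `t` agree on all variables in `X`. -/
def agree (X : Set V) (s t : V → O) : Prop := ∀ x ∈ X, s x = t x

/-- Truth of an LFD formula at an assignment in a dependence model. -/
def Sat (M : DepModel V Pred ar O) : Formula V Pred ar → (V → O) → Prop
  | .atom P x, s => (fun i => s (x i)) ∈ M.I P
  | .neg φ, s => ¬ Sat M φ s
  | .conj φ ψ, s => Sat M φ s ∧ Sat M ψ s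
  | .dd X φ, s => ∀ t ∈ M.A, agree (↑X) s t → Sat M φ t
  | .dep X y, s => ∀ t ∈ M.A, agree (↑X) s t → s y = t y

end LFD

namespace LFD

variable {V Pred : Type} {ar : Pred → ℕ}

/-- Material implication `φ → ψ`, defined classically as `¬(φ ∧ ¬ψ)`. -/
def impl (φ ψ : Formula V Pred ar) : Formula V Pred ar :=
  Formula.neg (Formula.conj φ (Formula.neg ψ))

/-- The conjunction `D_X Y ∧ θ`, i.e. the premises `D_X y` (for `y ∈ Y`) conjoined in
front of `θ` (just `θ` if `Y = ∅`); `D_X Y` abbreviates the conjunction of the atoms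
`D_X y` for `y ∈ Y`. -/
noncomputable def depPrem (X Y : Finset V) (θ : Formula V Pred ar) : Formula V Pred ar :=
  (Y.toList.map (fun y => Formula.dep X y)).foldr Formula.conj θ

/-- The Hilbert proof system **LFD**: classical propositional logic (all substitution
instances of propositional tautologies, plus modus ponens), 𝔻-Necessitation,
𝔻-Distribution, 𝔻-Introduction (for `Free(φ) ⊆ X`), 𝔻-Elimination, Projection,
Transitivity `(D_X Y ∧ D_Y Z) → D_X Z` (stated for each `z ∈ Z`), and Transfer
`(D_X Y ∧ 𝔻_Y φ) → 𝔻_X φ`. -/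
inductive Provable [DecidableEq V] : Formula V Pred ar → Prop where
  /-- all substitution instances of classical propositional tautologies -/
  | taut (φ : Formula V Pred ar)
      (h : ∀ v : Formula V Pred ar → Bool,
        (∀ ψ, v (Formula.neg ψ) = !(v ψ)) →
        (∀ ψ χ, v (Formula.conj ψ χ) = (v ψ && v χ)) → v φ = true) :
      Provable φ
  /-- modus ponens -/
  | mp {φ ψ : Formula V Pred ar} : Provable (impl φ ψ) → Provable φ → Provable ψ
  /-- 𝔻-Necessitation -/
  | nec (X : Finset V) {φ : Formula V Pred ar} : Provable φ → Provable (Formula.dd X φ)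
  /-- 𝔻-Distribution -/
  | distr (X : Finset V) (φ ψ : Formula V Pred ar) :
      Provable (impl (Formula.dd X (impl φ ψ))
        (impl (Formula.dd X φ) (Formula.dd X ψ)))
  /-- 𝔻-Introduction, provided `Free(φ) ⊆ X` -/
  | intro (X : Finset V) (φ : Formula V Pred ar) (h : Free φ ⊆ X) :
      Provable (impl φ (Formula.dd X φ))
  /-- 𝔻-Elimination -/
  | elim (X : Finset V) (φ : Formula V Pred ar) : Provable (impl (Formula.dd X φ) φ)
  /-- Projection: `D_X x` for `x ∈ X` -/
  | proj (X : Finset V) (x : V) (h : x ∈ X) : Provable (Formula.dep X x)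
  /-- Transitivity: `(D_X Y ∧ D_Y z) → D_X z` -/
  | trans (X Y : Finset V) (z : V) :
      Provable (impl (depPrem X Y (Formula.dep Y z)) (Formula.dep X z))
  /-- Transfer: `(D_X Y ∧ 𝔻_Y φ) → 𝔻_X φ` -/
  | transfer (X Y : Finset V) (φ : Formula V Pred ar) :
      Provable (impl (depPrem X Y (Formula.dd Y φ)) (Formula.dd X φ))

end LFD


/-!
Completeness by a canonical model built from paths. Worlds are maximal consistent sets, and
`w ~_X w'` holds when `φ ∈ w'` for every `𝔻_X φ ∈ w`; 𝔻-Introduction makes it symmetric.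
A path is a sequence of such steps from a fixed root, and the value of a variable `y` at a
path is its initial segment ending with the last step `(X, w)` whose source does not contain
`D_X y`. Two paths giving the same values to all of `X` share an initial segment after which
every step `(L, w)` has `D_L X` at its source; along these steps Transfer preserves every
formula with free variables in `X`, and Transitivity preserves the value of every `y` with
`D_X y`. This gives one direction of the truth lemma for atoms, `𝔻_X φ` and `D_X y`; the
other extends the path by a `~_X`-successor (existence lemma) or by a reflexive step.
-/

namespace LFD

open Formula

variable {V Pred : Type} {ar : Pred → ℕ}

section Valuation

variable {v : Formula V Pred ar → Bool} (hn : ∀ ψ, v (neg ψ) = !v ψ)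
  (hc : ∀ ψ χ, v (conj ψ χ) = (v ψ && v χ))
include hn hc

theorem eval_impl (A B : Formula V Pred ar) :
    v (impl A B) = true ↔ (v A = true → v B = true) := by
  simp only [impl, hn, hc]
  cases v A <;> cases v B <;> simp

theorem eval_foldr_impl (l : List (Formula V Pred ar)) (A : Formula V Pred ar) :
    v (l.foldr impl A) = true ↔ ((∀ ψ ∈ l, v ψ = true) → v A = true) := by
  induction l with
  | nil => simp
  | cons a l ih => simp only [List.foldr_cons, eval_impl hn hc, ih, List.forall_mem_cons]; tauto

end Valuation

variable [DecidableEq V]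

section Derivability

variable {Γ Δ : Set (Formula V Pred ar)} {A B : Formula V Pred ar}

def Derivable (Γ : Set (Formula V Pred ar)) (A : Formula V Pred ar) : Prop :=
  ∃ l : List (Formula V Pred ar), (∀ ψ ∈ l, ψ ∈ Γ) ∧ Provable (l.foldr impl A)

theorem Derivable.of_provable (h : Provable A) : Derivable Γ A :=
  ⟨[], by simp, h⟩

theorem Derivable.of_mem (h : A ∈ Γ) : Derivable Γ A :=
  ⟨[A], by simpa using h, .taut _ fun v hn hc => by simp [eval_impl hn hc]⟩

theorem Derivable.mono (hΓΔ : Γ ⊆ Δ) : Derivable Γ A → Derivable Δ A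
  | ⟨l, hl, hp⟩ => ⟨l, fun ψ hψ => hΓΔ (hl ψ hψ), hp⟩

theorem Derivable.mp : Derivable Γ (impl A B) → Derivable Γ A → Derivable Γ B
  | ⟨l₁, hl₁, hp₁⟩, ⟨l₂, hl₂, hp₂⟩ => by
    refine ⟨l₁ ++ l₂, by simpa [or_imp, forall_and] using ⟨hl₁, hl₂⟩, ?_⟩
    have taut : Provable (impl (l₁.foldr impl (impl A B))
        (impl (l₂.foldr impl A) ((l₁ ++ l₂).foldr impl B))) :=
      .taut _ fun v hn hc => by
        simp only [eval_impl hn hc, eval_foldr_impl hn hc, List.mem_append]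
        grind
    exact .mp (.mp taut hp₁) hp₂

theorem Derivable.impl_of_insert : Derivable (insert A Γ) B → Derivable Γ (impl A B)
  | ⟨l, hl, hp⟩ => by
    classical
    refine ⟨l.filter (· ≠ A), fun ψ hψ => ?_, .mp ?_ hp⟩
    · simp only [List.mem_filter, decide_eq_true_eq] at hψ
      exact (Set.mem_insert_iff.1 (hl ψ hψ.1)).resolve_left hψ.2
    · refine .taut _ fun v hn hc => ?_
      simp only [eval_impl hn hc, eval_foldr_impl hn hc, List.mem_filter, decide_eq_true_eq]
      grind

theorem Derivable.of_provable_impl (hAB : Provable (impl A B)) (hA : Derivable Γ A) :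
    Derivable Γ B :=
  (Derivable.of_provable hAB).mp hA

def Consistent (Γ : Set (Formula V Pred ar)) : Prop :=
  ¬ ∃ A, Derivable Γ A ∧ Derivable Γ (neg A)

theorem Derivable.of_not_consistent (h : ¬ Consistent Γ) (B : Formula V Pred ar) :
    Derivable Γ B := by
  obtain ⟨A, hA, hnA⟩ := not_not.1 h
  have efq : Provable (impl A (impl (neg A) B)) :=
    .taut _ fun v hn hc => by simp only [eval_impl hn hc, hn]; cases v A <;> simp
  exact (hA.of_provable_impl efq).mp hnA

theorem Derivable.of_not_consistent_insert_neg (h : ¬ Consistent (insert (neg A) Γ)) :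
    Derivable Γ A := by
  have clavius : Provable (impl (impl (neg A) A) A) :=
    .taut _ fun v hn hc => by simp only [eval_impl hn hc, hn]; cases v A <;> simp
  exact ((Derivable.of_not_consistent h A).impl_of_insert).of_provable_impl clavius

theorem Derivable.neg_of_not_consistent_insert (h : ¬ Consistent (insert A Γ)) :
    Derivable Γ (neg A) := by
  have clavius : Provable (impl (impl A (neg A)) (neg A)) :=
    .taut _ fun v hn hc => by simp only [eval_impl hn hc, hn]; cases v A <;> simp
  exact ((Derivable.of_not_consistent h (neg A)).impl_of_insert).of_provable_impl clavius

theorem isOfFiniteCharacter_consistent :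
    Order.IsOfFiniteCharacter {Γ : Set (Formula V Pred ar) | Consistent Γ} := by
  refine fun Γ => ⟨fun hΓ Γ₀ hΓ₀ _ ⟨A, hA, hnA⟩ => hΓ ⟨A, hA.mono hΓ₀, hnA.mono hΓ₀⟩, ?_⟩
  rintro h ⟨A, ⟨l₁, hl₁, hp₁⟩, ⟨l₂, hl₂, hp₂⟩⟩
  refine h {ψ | ψ ∈ l₁ ++ l₂} (fun ψ hψ => ?_) (l₁ ++ l₂).finite_toSet
    ⟨A, ⟨l₁, fun ψ hψ => List.mem_append_left _ hψ, hp₁⟩,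
      ⟨l₂, fun ψ hψ => List.mem_append_right _ hψ, hp₂⟩⟩
  exact (List.mem_append.1 hψ).elim (hl₁ ψ) (hl₂ ψ)

def MaximalConsistent (Δ : Set (Formula V Pred ar)) : Prop :=
  Consistent Δ ∧ ∀ A, A ∈ Δ ∨ neg A ∈ Δ

theorem exists_maximalConsistent_of_consistent (h : Consistent Γ) :
    ∃ Δ, Γ ⊆ Δ ∧ MaximalConsistent Δ := by
  obtain ⟨Δ, hΓΔ, hmax⟩ := isOfFiniteCharacter_consistent.exists_maximal h
  have closed {A} (hA : Derivable Δ A) : A ∈ Δ :=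
    hmax.mem_of_prop_insert fun ⟨B, hB, hnB⟩ =>
      hmax.prop ⟨B, (hB.impl_of_insert).mp hA, (hnB.impl_of_insert).mp hA⟩
  refine ⟨Δ, hΓΔ, hmax.prop, fun A => or_iff_not_imp_left.2 fun hA => closed ?_⟩
  exact .neg_of_not_consistent_insert fun hcon => hA (hmax.mem_of_prop_insert hcon)

namespace MaximalConsistent

variable (hΔ : MaximalConsistent Δ)
include hΔ

theorem mem_of_derivable (hA : Derivable Δ A) : A ∈ Δ :=
  (hΔ.2 A).resolve_right fun hnA => hΔ.1 ⟨A, hA, .of_mem hnA⟩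

theorem mem_of_provable (hA : Provable A) : A ∈ Δ :=
  hΔ.mem_of_derivable (.of_provable hA)

theorem mem_of_impl_mem (hAB : impl A B ∈ Δ) (hA : A ∈ Δ) : B ∈ Δ :=
  hΔ.mem_of_derivable ((Derivable.of_mem hAB).mp (.of_mem hA))

theorem mem_of_provable_impl (hAB : Provable (impl A B)) (hA : A ∈ Δ) : B ∈ Δ :=
  hΔ.mem_of_impl_mem (hΔ.mem_of_provable hAB) hA

theorem neg_mem_iff : neg A ∈ Δ ↔ A ∉ Δ :=
  ⟨fun hnA hA => hΔ.1 ⟨A, .of_mem hA, .of_mem hnA⟩, (hΔ.2 A).resolve_left⟩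

theorem conj_mem_iff : conj A B ∈ Δ ↔ A ∈ Δ ∧ B ∈ Δ := by
  refine ⟨fun h => ⟨hΔ.mem_of_provable_impl ?_ h, hΔ.mem_of_provable_impl ?_ h⟩,
    fun ⟨hA, hB⟩ => hΔ.mem_of_impl_mem (hΔ.mem_of_provable_impl ?_ hA) hB⟩ <;>
  exact .taut _ fun v hn hc => by
    simp only [eval_impl hn hc, hc]; cases v A <;> cases v B <;> simp

theorem depPrem_mem {X Y : Finset V} {θ : Formula V Pred ar}
    (hXY : ∀ y ∈ Y, dep X y ∈ Δ) (hθ : θ ∈ Δ) : depPrem X Y θ ∈ Δ := by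
  replace hXY : ∀ y ∈ Y.toList, dep X y ∈ Δ := by simpa using hXY
  rw [depPrem]
  generalize Y.toList = l at hXY ⊢
  induction l with
  | nil => exact hθ
  | cons y l ih =>
    rw [List.forall_mem_cons] at hXY
    exact hΔ.conj_mem_iff.2 ⟨hXY.1, ih hXY.2⟩

end MaximalConsistent

end Derivability

def World (V Pred : Type) [DecidableEq V] (ar : Pred → ℕ) : Type :=
  {Δ : Set (Formula V Pred ar) // MaximalConsistent Δ}

namespace World

variable {X L : Finset V} {w w' : World V Pred ar} {A θ : Formula V Pred ar}

def Rel (X : Finset V) (w w' : World V Pred ar) : Prop :=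
  ∀ A, dd X A ∈ w.1 → A ∈ w'.1

theorem Rel.refl (X : Finset V) (w : World V Pred ar) : Rel X w w :=
  fun A => w.2.mem_of_provable_impl (.elim X A)

theorem Rel.mem_of_free_subset (h : Rel X w w') (hθ : Free θ ⊆ X) (hmem : θ ∈ w.1) :
    θ ∈ w'.1 :=
  h θ (w.2.mem_of_provable_impl (.intro X θ hθ) hmem)

theorem Rel.symm (h : Rel X w w') : Rel X w' w := by
  intro A hA
  by_contra hAw
  have hn : neg (dd X A) ∈ w.1 :=
    w.2.neg_mem_iff.2 fun hdd => hAw (w.2.mem_of_provable_impl (.elim X A) hdd)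
  exact w'.2.neg_mem_iff.1 (h.mem_of_free_subset subset_rfl hn) hA

theorem Rel.transfer (h : Rel L w w') (hLX : ∀ x ∈ X, dep L x ∈ w.1) (hθ : Free θ ⊆ X)
    (hmem : θ ∈ w.1) : θ ∈ w'.1 :=
  h θ <| w.2.mem_of_provable_impl (.transfer L X θ) <|
    w.2.depPrem_mem hLX (w.2.mem_of_provable_impl (.intro X θ hθ) hmem)

theorem dd_mem_of_derivable (h : Derivable {ψ | dd X ψ ∈ w.1} A) : dd X A ∈ w.1 := by
  obtain ⟨l, hl, hp⟩ := h
  have hdd : dd X (l.foldr impl A) ∈ w.1 := w.2.mem_of_provable (.nec X hp)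
  clear hp
  induction l with
  | nil => exact hdd
  | cons a l ih =>
    rw [List.forall_mem_cons] at hl
    exact ih hl.2 (w.2.mem_of_impl_mem (w.2.mem_of_provable_impl (.distr X a _) hdd) hl.1)

theorem exists_rel_not_mem (h : dd X A ∉ w.1) : ∃ w', Rel X w w' ∧ A ∉ w'.1 := by
  have hcon : Consistent (insert (neg A) {ψ | dd X ψ ∈ w.1}) := by
    by_contra hin
    exact h (dd_mem_of_derivable (.of_not_consistent_insert_neg hin))
  obtain ⟨Δ, hsub, hΔ⟩ := exists_maximalConsistent_of_consistent hcon
  exact ⟨⟨Δ, hΔ⟩, fun ψ hψ => hsub (Or.inr hψ), hΔ.neg_mem_iff.1 (hsub (Or.inl rfl))⟩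

end World

-- Steps are listed newest first, so an initial segment of a path is a list suffix.
abbrev Path (V Pred : Type) [DecidableEq V] (ar : Pred → ℕ) : Type :=
  List (Finset V × World V Pred ar)

section Path

variable (r : World V Pred ar)

def endpoint : Path V Pred ar → World V Pred ar
  | [] => r
  | (_, w) :: _ => w

def IsPath : Path V Pred ar → Prop
  | [] => True
  | (X, w) :: l => World.Rel X (endpoint r l) w ∧ IsPath l

open Classical in
noncomputable def value (y : V) : Path V Pred ar → Path V Pred ar
  | [] => []
  | (X, w) :: l => if dep X y ∈ (endpoint r l).1 then value y l else (X, w) :: l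

variable {r} {X L : Finset V} {w : World V Pred ar} {l s l₁ l₂ : Path V Pred ar} {y : V}
  {θ : Formula V Pred ar}

theorem value_cons_of_dep_mem (h : dep X y ∈ (endpoint r l).1) :
    value r y ((X, w) :: l) = value r y l := by
  simp only [value, if_pos h]

theorem value_cons_of_mem (hy : y ∈ X) : value r y ((X, w) :: l) = value r y l :=
  value_cons_of_dep_mem ((endpoint r l).2.mem_of_provable (.proj X y hy))

theorem value_suffix (y : V) : ∀ l : Path V Pred ar, value r y l <:+ l
  | [] => List.suffix_rfl
  | (X, w) :: l => by
    rw [value]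
    split_ifs
    · exact (value_suffix y l).trans (List.suffix_cons _ _)
    · exact List.suffix_rfl

theorem dep_mem_of_value_cons_suffix (hs : s <:+ l)
    (h : value r y ((L, w) :: l) <:+ s) : dep L y ∈ (endpoint r l).1 := by
  by_contra hd
  rw [value, if_neg hd] at h
  have := (h.trans hs).length_le
  simp at this

theorem mem_endpoint_iff_of_value_suffix (hθ : Free θ ⊆ X) :
    ∀ {l s : Path V Pred ar}, IsPath r l → s <:+ l → (∀ x ∈ X, value r x l <:+ s) →
      (θ ∈ (endpoint r l).1 ↔ θ ∈ (endpoint r s).1)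
  | [], _, _, hs, _ => by rw [List.suffix_nil.1 hs]
  | (L, w) :: l, s, hl, hs, hX => by
    rcases List.suffix_cons_iff.1 hs with rfl | hs
    · rfl
    have hLX (x) (hx : x ∈ X) : dep L x ∈ (endpoint r l).1 :=
      dep_mem_of_value_cons_suffix hs (hX x hx)
    have hLX' (x) (hx : x ∈ X) : dep L x ∈ w.1 :=
      hl.1.mem_of_free_subset subset_rfl (hLX x hx)
    have hstep : θ ∈ w.1 ↔ θ ∈ (endpoint r l).1 :=
      ⟨hl.1.symm.transfer hLX' hθ, hl.1.transfer hLX hθ⟩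
    refine hstep.trans (mem_endpoint_iff_of_value_suffix hθ hl.2 hs fun x hx => ?_)
    simpa only [value_cons_of_dep_mem (hLX x hx)] using hX x hx

theorem value_eq_of_value_suffix (hXy : dep X y ∈ (endpoint r s).1) :
    ∀ {l : Path V Pred ar}, IsPath r l → s <:+ l → (∀ x ∈ X, value r x l <:+ s) →
      value r y l = value r y s
  | [], _, hs, _ => by rw [List.suffix_nil.1 hs]
  | (L, w) :: l, hl, hs, hX => by
    rcases List.suffix_cons_iff.1 hs with rfl | hs
    · rfl
    have hLX (x) (hx : x ∈ X) : dep L x ∈ (endpoint r l).1 :=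
      dep_mem_of_value_cons_suffix hs (hX x hx)
    have hX' (x) (hx : x ∈ X) : value r x l <:+ s := by
      simpa only [value_cons_of_dep_mem (hLX x hx)] using hX x hx
    have hXy' : dep X y ∈ (endpoint r l).1 :=
      (mem_endpoint_iff_of_value_suffix (by simp [Free]) hl.2 hs hX').2 hXy
    have hLy : dep L y ∈ (endpoint r l).1 :=
      (endpoint r l).2.mem_of_provable_impl (.trans L X y)
        ((endpoint r l).2.depPrem_mem hLX hXy')
    rw [value_cons_of_dep_mem hLy]
    exact value_eq_of_value_suffix hXy hl.2 hs hX'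

theorem exists_suffix_of_value_eq (hag : ∀ x ∈ X, value r x l₁ = value r x l₂) :
    ∃ s, s <:+ l₁ ∧ s <:+ l₂ ∧ ∀ x ∈ X, value r x l₁ <:+ s := by
  rcases X.eq_empty_or_nonempty with rfl | hX
  · exact ⟨[], List.nil_suffix, List.nil_suffix, by simp⟩
  obtain ⟨x₀, hx₀, hmax⟩ := X.exists_max_image (fun x => (value r x l₁).length) hX
  refine ⟨value r x₀ l₁, value_suffix x₀ l₁, hag x₀ hx₀ ▸ value_suffix x₀ l₂, fun x hx => ?_⟩
  exact List.suffix_of_suffix_length_le (value_suffix x l₁) (value_suffix x₀ l₁) (hmax x hx)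

theorem mem_endpoint_of_value_eq (hθ : Free θ ⊆ X) (h₁ : IsPath r l₁) (h₂ : IsPath r l₂)
    (hag : ∀ x ∈ X, value r x l₁ = value r x l₂) (hmem : θ ∈ (endpoint r l₁).1) :
    θ ∈ (endpoint r l₂).1 := by
  obtain ⟨s, hs₁, hs₂, hX⟩ := exists_suffix_of_value_eq hag
  have hX₂ (x) (hx : x ∈ X) : value r x l₂ <:+ s := hag x hx ▸ hX x hx
  exact (mem_endpoint_iff_of_value_suffix hθ h₂ hs₂ hX₂).2
    ((mem_endpoint_iff_of_value_suffix hθ h₁ hs₁ hX).1 hmem)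

theorem value_eq_of_value_eq (h₁ : IsPath r l₁) (h₂ : IsPath r l₂)
    (hag : ∀ x ∈ X, value r x l₁ = value r x l₂) (hXy : dep X y ∈ (endpoint r l₁).1) :
    value r y l₁ = value r y l₂ := by
  obtain ⟨s, hs₁, hs₂, hX⟩ := exists_suffix_of_value_eq hag
  have hX₂ (x) (hx : x ∈ X) : value r x l₂ <:+ s := hag x hx ▸ hX x hx
  have hXy' : dep X y ∈ (endpoint r s).1 :=
    (mem_endpoint_iff_of_value_suffix (by simp [Free]) h₁ hs₁ hX).1 hXy
  rw [value_eq_of_value_suffix hXy' h₁ hs₁ hX, value_eq_of_value_suffix hXy' h₂ hs₂ hX₂]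

end Path

section CanonicalModel

variable (r : World V Pred ar)

-- Tagging each value with its variable lets the tuple of an atom determine the atom's variables.
noncomputable def assignment (l : Path V Pred ar) (y : V) : V × Path V Pred ar :=
  (y, value r y l)

noncomputable def canonicalModel : DepModel V Pred ar (V × Path V Pred ar) where
  I P := {f | ∃ l x, IsPath r l ∧ atom P x ∈ (endpoint r l).1 ∧ f = assignment r l ∘ x}
  A := {s | ∃ l, IsPath r l ∧ s = assignment r l}

variable {r} {l : Path V Pred ar} {X : Finset V} {A : Formula V Pred ar}

theorem agree_assignment_iff {l₁ l₂ : Path V Pred ar} :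
    agree (↑X) (assignment r l₁) (assignment r l₂) ↔ ∀ x ∈ X, value r x l₁ = value r x l₂ := by
  simp [agree, assignment]

theorem sat_atom_iff (hl : IsPath r l) {P : Pred} {x : Fin (ar P) → V} :
    Sat (canonicalModel r) (atom P x) (assignment r l) ↔ atom P x ∈ (endpoint r l).1 := by
  refine ⟨fun ⟨l', x', hl', hmem, heq⟩ => ?_, fun h => ⟨l, x, hl, h, rfl⟩⟩
  obtain rfl : x' = x := funext fun i => (congrArg Prod.fst (congrFun heq i)).symm
  refine mem_endpoint_of_value_eq subset_rfl hl' hl ?_ hmem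
  simp only [Free, Finset.mem_image, Finset.mem_univ, true_and, forall_exists_index,
    forall_apply_eq_imp_iff]
  exact fun i => (congrArg Prod.snd (congrFun heq i)).symm

theorem sat_dd_iff (hl : IsPath r l)
    (ih : ∀ l, IsPath r l →
      (Sat (canonicalModel r) A (assignment r l) ↔ A ∈ (endpoint r l).1)) :
    Sat (canonicalModel r) (dd X A) (assignment r l) ↔ dd X A ∈ (endpoint r l).1 := by
  constructor
  · intro hsat
    by_contra hdd
    obtain ⟨w, hw, hA⟩ := World.exists_rel_not_mem hdd
    have hl' : IsPath r ((X, w) :: l) := ⟨hw, hl⟩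
    refine hA ((ih _ hl').1 (hsat _ ⟨_, hl', rfl⟩ ?_))
    exact agree_assignment_iff.2 fun x hx => (value_cons_of_mem hx).symm
  · rintro hdd _ ⟨l', hl', rfl⟩ hag
    have hdd' := mem_endpoint_of_value_eq (θ := dd X A) subset_rfl hl hl'
      (agree_assignment_iff.1 hag) hdd
    exact (ih l' hl').2 ((endpoint r l').2.mem_of_provable_impl (.elim X A) hdd')

theorem sat_dep_iff (hl : IsPath r l) {y : V} :
    Sat (canonicalModel r) (dep X y) (assignment r l) ↔ dep X y ∈ (endpoint r l).1 := by
  constructor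
  · intro hsat
    by_contra hdep
    have hl' : IsPath r ((X, endpoint r l) :: l) := ⟨.refl X _, hl⟩
    have hy := congrArg Prod.snd <| hsat _ ⟨_, hl', rfl⟩ <|
      agree_assignment_iff.2 fun x hx => (value_cons_of_mem hx).symm
    simp only [assignment, value, if_neg hdep] at hy
    have := (hy ▸ value_suffix y l).length_le
    simp at this
  · rintro hdep _ ⟨l', hl', rfl⟩ hag
    simp [assignment, value_eq_of_value_eq hl hl' (agree_assignment_iff.1 hag) hdep]

theorem sat_canonicalModel_iff (A : Formula V Pred ar) (hl : IsPath r l) :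
    Sat (canonicalModel r) A (assignment r l) ↔ A ∈ (endpoint r l).1 := by
  induction A generalizing l with
  | atom P x => exact sat_atom_iff hl
  | neg A ih => exact (ih hl).not.trans (endpoint r l).2.neg_mem_iff.symm
  | conj A B ihA ihB =>
    exact (and_congr (ihA hl) (ihB hl)).trans (endpoint r l).2.conj_mem_iff.symm
  | dd X A ih => exact sat_dd_iff hl fun l hl => ih hl
  | dep X y => exact sat_dep_iff hl

end CanonicalModel

theorem exists_model_of_consistent {Γ : Set (Formula V Pred ar)} (hΓ : Consistent Γ) :
    ∃ (O : Type) (M : DepModel V Pred ar O) (s : V → O), s ∈ M.A ∧ ∀ ψ ∈ Γ, Sat M ψ s := by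
  obtain ⟨Δ, hΓΔ, hΔ⟩ := exists_maximalConsistent_of_consistent hΓ
  let r : World V Pred ar := ⟨Δ, hΔ⟩
  refine ⟨_, canonicalModel r, assignment r [], ⟨[], trivial, rfl⟩, fun ψ hψ => ?_⟩
  exact (sat_canonicalModel_iff ψ (l := []) trivial).2 (hΓΔ hψ)

end LFD

open LFD

/-- Strong completeness: if every admissible assignment (of every dependence model)
satisfying all formulas of `Ψ` also satisfies `φ`, then `φ` is provable from `Ψ`: there
is a finite list `Ψ₀` of formulas from `Ψ` such that the implication `⋀Ψ₀ → φ` (written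
as the iterated implication `ψ₁ → (… → (ψ_k → φ))`) is provable in **LFD**. -/
theorem stmt14 {V Pred : Type} [DecidableEq V] {ar : Pred → ℕ}
    (Ψ : Set (Formula V Pred ar)) (φ : Formula V Pred ar)
    (h : ∀ (O : Type) (M : DepModel V Pred ar O) (s : V → O), s ∈ M.A →
      (∀ ψ ∈ Ψ, Sat M ψ s) → Sat M φ s) :
    ∃ l : List (Formula V Pred ar), (∀ ψ ∈ l, ψ ∈ Ψ) ∧ Provable (l.foldr impl φ) := by
  by_contra hφ
  have hcon : Consistent (insert (Formula.neg φ) Ψ) := fun hin =>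
    hφ (Derivable.of_not_consistent_insert_neg (not_not.2 hin))
  obtain ⟨O, M, s, hs, hsat⟩ := exists_model_of_consistent hcon
  have hΨ (ψ) (hψ : ψ ∈ Ψ) : Sat M ψ s := hsat ψ (Set.mem_insert_of_mem _ hψ)
  exact hsat _ (Set.mem_insert _ _) (h O M s hs hΨ)
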